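/- arXiv:1710.06759 — 2 statements merged into one kernel-verified Lean document; each statement's English description precedes it below -/
import Mathlib

section
/- Let (Z, 𝒜, μ) be a probability space, Φ : Z → Z a measurable map, and ψ : Z → ℝ^k measurable such that all products ψ_a ψ_b and ψ_a · (ψ_b ∘ Φ) are μ-integrable. Let X_1, X_2, … be an i.i.d. sequence of Z-valued random variables with law μ. Define the empirical matrices G_m = (1/m) Σ_{i=1}^m ψ(X_i) ψ(X_i)ᵀ and C_m = (1/m) Σ_{i=1}^m ψ(Φ(X_i)) ψ(X_i)ᵀ, and the limit matrices G = ∫ ψ(z) ψ(z)ᵀ dμ(z) and C = ∫ ψ(Φ(z)) ψ(z)ᵀ dμ(z). If G is invertible, then almost surely the EDMD matrices C_m G_m⁻¹ converge to C G⁻¹ as m → ∞ (in particular, G_m is almost surely eventually invertible). -/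
/-!
Every entry of `G_m` and `C_m` is an empirical mean of an integrable function of the i.i.d.
samples, so by the strong law of large numbers `G_m → G` and `C_m → C` almost surely. Invertibility
of the determinant is an open condition and matrix inversion is continuous there, hence `G_m` is
eventually invertible and `C_m G_m⁻¹ → C G⁻¹`.
-/

open MeasureTheory Filter ProbabilityTheory Topology Finset

section StrongLaw

variable {Ω Z : Type*} [MeasurableSpace Ω] [MeasurableSpace Z] {P : Measure Ω} {μ : Measure Z}
  {X : ℕ → Ω → Z}

theorem ae_tendsto_average_comp_of_iIndepFun (hX : ∀ i, Measurable (X i)) (hiid : iIndepFun X P)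
    (hlaw : ∀ i, P.map (X i) = μ) {f : Z → ℝ} (hf : Measurable f) (hfint : Integrable f μ) :
    ∀ᵐ ω ∂P, Tendsto (fun m : ℕ => (∑ i ∈ range m, f (X i ω)) / m) atTop (𝓝 (∫ z, f z ∂μ)) := by
  have hident : ∀ i, IdentDistrib (fun ω => f (X i ω)) (fun ω => f (X 0 ω)) P P := fun i =>
    (IdentDistrib.mk (hX i).aemeasurable (hX 0).aemeasurable (by rw [hlaw i, hlaw 0])).comp hf
  have hint0 : Integrable (fun ω => f (X 0 ω)) P :=
    (integrable_map_measure hf.aestronglyMeasurable (hX 0).aemeasurable).mp (by rwa [hlaw 0])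
  have hmean : ∫ ω, f (X 0 ω) ∂P = ∫ z, f z ∂μ := by
    rw [← hlaw 0, integral_map (hX 0).aemeasurable hf.aestronglyMeasurable]
  simpa only [hmean] using strong_law_ae_real (fun i ω => f (X i ω)) hint0
    (fun i j hij => (hiid.indepFun hij).comp hf hf) hident

theorem ae_tendsto_average_matrix_of_iIndepFun {ι κ : Type*} [Countable ι] [Countable κ]
    (hX : ∀ i, Measurable (X i)) (hiid : iIndepFun X P) (hlaw : ∀ i, P.map (X i) = μ)
    {F : Z → Matrix ι κ ℝ} (hF : ∀ a b, Measurable fun z => F z a b)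
    (hFint : ∀ a b, Integrable (fun z => F z a b) μ) :
    ∀ᵐ ω ∂P, Tendsto (fun m : ℕ => (m : ℝ)⁻¹ • ∑ i ∈ range m, F (X i ω)) atTop
      (𝓝 (Matrix.of fun a b => ∫ z, F z a b ∂μ)) := by
  have hentries : ∀ᵐ ω ∂P, ∀ a b, Tendsto (fun m : ℕ => (∑ i ∈ range m, F (X i ω) a b) / m)
      atTop (𝓝 (∫ z, F z a b ∂μ)) := by
    simp only [ae_all_iff]
    exact fun a b => ae_tendsto_average_comp_of_iIndepFun hX hiid hlaw (hF a b) (hFint a b)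
  filter_upwards [hentries] with ω hω
  refine tendsto_pi_nhds.2 fun a => tendsto_pi_nhds.2 fun b => ?_
  simpa [Matrix.sum_apply, div_eq_inv_mul] using hω a b

end StrongLaw

section MatrixInverse

variable {α n 𝕜 : Type*} [Fintype n] [DecidableEq n] [Field 𝕜] [TopologicalSpace 𝕜]
  [IsTopologicalRing 𝕜] {l : Filter α} {A : α → Matrix n n 𝕜} {B : Matrix n n 𝕜}

theorem Filter.Tendsto.eventually_isUnit_det [T1Space 𝕜] (hA : Tendsto A l (𝓝 B))
    (hB : IsUnit B.det) : ∀ᶠ x in l, IsUnit (A x).det := by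
  have hdet : Tendsto (fun x => (A x).det) l (𝓝 B.det) :=
    (continuous_id.matrix_det.tendsto B).comp hA
  simpa only [isUnit_iff_ne_zero] using hdet.eventually_ne (isUnit_iff_ne_zero.mp hB)

theorem Filter.Tendsto.matrix_inv [ContinuousInv₀ 𝕜] (hA : Tendsto A l (𝓝 B))
    (hB : IsUnit B.det) : Tendsto (fun x => (A x)⁻¹) l (𝓝 B⁻¹) := by
  refine (continuousAt_matrix_inv B ?_).tendsto.comp hA
  rw [Ring.inverse_eq_inv']
  exact continuousAt_inv₀ (isUnit_iff_ne_zero.mp hB)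

end MatrixInverse

theorem edmd_tendsto_galerkin_ae_general
    {Z Ω : Type*} [MeasurableSpace Z] [MeasurableSpace Ω]
    (P : Measure Ω)
    (μ : Measure Z)
    (Φ : Z → Z) (hΦ : Measurable Φ)
    (k : ℕ) (ψ : Z → Fin k → ℝ) (hψ : ∀ a : Fin k, Measurable fun z => ψ z a)
    (hint : ∀ a b : Fin k, Integrable (fun z => ψ z a * ψ z b) μ)
    (hintΦ : ∀ a b : Fin k, Integrable (fun z => ψ (Φ z) a * ψ z b) μ)
    (X : ℕ → Ω → Z) (hX : ∀ i, Measurable (X i))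
    (hiid : ProbabilityTheory.iIndepFun X P)
    (hlaw : ∀ i, Measure.map (X i) P = μ)
    (hG : IsUnit (Matrix.of fun a b : Fin k => ∫ z, ψ z a * ψ z b ∂μ).det) :
    ∀ᵐ ω ∂P,
      (∀ᶠ m : ℕ in atTop,
        IsUnit ((m : ℝ)⁻¹ • ∑ i ∈ Finset.range m,
          Matrix.of fun a b : Fin k => ψ (X i ω) a * ψ (X i ω) b).det) ∧
      Tendsto
        (fun m : ℕ =>
          ((m : ℝ)⁻¹ • ∑ i ∈ Finset.range m,
            Matrix.of fun a b : Fin k => ψ (Φ (X i ω)) a * ψ (X i ω) b) *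
          ((m : ℝ)⁻¹ • ∑ i ∈ Finset.range m,
            Matrix.of fun a b : Fin k => ψ (X i ω) a * ψ (X i ω) b)⁻¹)
        atTop
        (nhds ((Matrix.of fun a b : Fin k => ∫ z, ψ (Φ z) a * ψ z b ∂μ) *
               (Matrix.of fun a b : Fin k => ∫ z, ψ z a * ψ z b ∂μ)⁻¹)) := by
  have hGram := ae_tendsto_average_matrix_of_iIndepFun hX hiid hlaw
    (F := fun z => Matrix.of fun a b : Fin k => ψ z a * ψ z b) (fun a b => (hψ a).mul (hψ b)) hint
  have hCross := ae_tendsto_average_matrix_of_iIndepFun hX hiid hlaw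
    (F := fun z => Matrix.of fun a b : Fin k => ψ (Φ z) a * ψ z b)
    (fun a b => ((hψ a).comp hΦ).mul (hψ b)) hintΦ
  exact (hGram.and hCross).mono fun ω ⟨hGω, hCω⟩ =>
    ⟨hGω.eventually_isUnit_det hG, hCω.mul (hGω.matrix_inv hG)⟩

/-- Almost sure convergence of the EDMD matrices `C_m G_m⁻¹`, built from `m` i.i.d. samples
drawn from `μ`, to the Galerkin matrix `C G⁻¹`, provided the limiting Gram matrix `G` is
invertible; in particular the empirical Gram matrices `G_m` are almost surely eventually
invertible. -/
theorem edmd_tendsto_galerkin_ae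
    {Z Ω : Type*} [MeasurableSpace Z] [MeasurableSpace Ω]
    (P : Measure Ω) [IsProbabilityMeasure P]
    (μ : Measure Z) [IsProbabilityMeasure μ]
    (Φ : Z → Z) (hΦ : Measurable Φ)
    (k : ℕ) (ψ : Z → Fin k → ℝ) (hψ : ∀ a : Fin k, Measurable fun z => ψ z a)
    (hint : ∀ a b : Fin k, Integrable (fun z => ψ z a * ψ z b) μ)
    (hintΦ : ∀ a b : Fin k, Integrable (fun z => ψ (Φ z) a * ψ z b) μ)
    (X : ℕ → Ω → Z) (hX : ∀ i, Measurable (X i))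
    (hiid : ProbabilityTheory.iIndepFun X P)
    (hlaw : ∀ i, Measure.map (X i) P = μ)
    (hG : IsUnit (Matrix.of fun a b : Fin k => ∫ z, ψ z a * ψ z b ∂μ).det) :
    ∀ᵐ ω ∂P,
      (∀ᶠ m : ℕ in atTop,
        IsUnit ((m : ℝ)⁻¹ • ∑ i ∈ Finset.range m,
          Matrix.of fun a b : Fin k => ψ (X i ω) a * ψ (X i ω) b).det) ∧
      Tendsto
        (fun m : ℕ =>
          ((m : ℝ)⁻¹ • ∑ i ∈ Finset.range m,
            Matrix.of fun a b : Fin k => ψ (Φ (X i ω)) a * ψ (X i ω) b) *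
          ((m : ℝ)⁻¹ • ∑ i ∈ Finset.range m,
            Matrix.of fun a b : Fin k => ψ (X i ω) a * ψ (X i ω) b)⁻¹)
        atTop
        (nhds ((Matrix.of fun a b : Fin k => ∫ z, ψ (Φ z) a * ψ z b ∂μ) *
               (Matrix.of fun a b : Fin k => ∫ z, ψ z a * ψ z b ∂μ)⁻¹)) :=
  edmd_tendsto_galerkin_ae_general P μ Φ hΦ k ψ hψ hint hintΦ X hX hiid hlaw hG
end

section
/- Let M be a set, n_c, k, p ∈ ℕ with n_c ≥ 1, Φ_j : M → M for j = 0, …, n_c − 1, g : M → ℝ^k, and K_0, …, K_{n_c−1} real k×k matrices satisfying g(Φ_j(y)) = K_jᵀ g(y) for all y ∈ M and all j; let L : M → ℝ and L_K : ℝ^k → ℝ satisfy L(y) = L_K(g(y)) for all y ∈ M. Fix an initial state y⁰ ∈ M. For a control sequence τ ∈ {0, …, n_c − 1}^p, define the full-model MPC objective J(τ) = Σ_{i=0}^{p−1} L(Y_i) with Y_0 = y⁰, Y_{i+1} = Φ_{τ_i}(Y_i), and the reduced objective J_K(τ) = Σ_{i=0}^{p−1} L_K(Z_i) with Z_0 =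 g(y⁰), Z_{i+1} = K_{τ_i}ᵀ Z_i. Then J(τ) = J_K(τ) for every τ ∈ {0, …, n_c − 1}^p, and consequently τ* minimizes J_K over {0, …, n_c − 1}^p if and only if τ* minimizes J over {0, …, n_c − 1}^p. -/
open Matrix

/-- Trajectory of the switched discrete system over a finite horizon of `p` steps:
`trajFin F y0 n` is the state at time `n`, with `y_{i+1} = F i y_i` for `i < p`. -/
def trajFin {α : Type*} {p : ℕ} (F : Fin p → α → α) (y0 : α) : ℕ → α
  | 0 => y0
  | n + 1 => if h : n < p then F ⟨n, h⟩ (trajFin F y0 n) else trajFin F y0 n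

/-- Full-model MPC objective `J(τ) = Σ_{i=0}^{p-1} L(Y_i)` with `Y_0 = y0` and
`Y_{i+1} = Φ_{τ_i}(Y_i)`. -/
def mpcCostFull {M : Type*} (n_c p : ℕ) (Φ : Fin n_c → M → M) (L : M → ℝ)
    (y0 : M) (τ : Fin p → Fin n_c) : ℝ :=
  ∑ n ∈ Finset.range p, L (trajFin (fun i y => Φ (τ i) y) y0 n)

/-- Reduced (K-ROM) MPC objective `J_K(τ) = Σ_{i=0}^{p-1} L_K(Z_i)` with `Z_0 = z0` and
`Z_{i+1} = K_{τ_i}ᵀ Z_i`. -/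
def mpcCostROM (n_c k p : ℕ) (K : Fin n_c → Matrix (Fin k) (Fin k) ℝ)
    (LK : (Fin k → ℝ) → ℝ) (z0 : Fin k → ℝ) (τ : Fin p → Fin n_c) : ℝ :=
  ∑ n ∈ Finset.range p, LK (trajFin (fun i z => (K (τ i))ᵀ.mulVec z) z0 n)

theorem apply_trajFin_of_semiconj {α β : Type*} {p : ℕ} {F : Fin p → α → α}
    {G : Fin p → β → β} {g : α → β} (hg : ∀ i, Function.Semiconj g (F i) (G i)) (y0 : α) :
    ∀ n, g (trajFin F y0 n) = trajFin G (g y0) n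
  | 0 => rfl
  | n + 1 => by
    simp only [trajFin]
    split
    · rw [hg, apply_trajFin_of_semiconj hg y0 n]
    · exact apply_trajFin_of_semiconj hg y0 n

theorem mpcCostFull_eq_mpcCostROM {M : Type*} {n_c k p : ℕ} {Φ : Fin n_c → M → M}
    {g : M → Fin k → ℝ} {K : Fin n_c → Matrix (Fin k) (Fin k) ℝ}
    (hK : ∀ j y, g (Φ j y) = (K j)ᵀ.mulVec (g y)) {L : M → ℝ} {LK : (Fin k → ℝ) → ℝ}
    (hL : ∀ y, L y = LK (g y)) (y0 : M) :
    mpcCostFull n_c p Φ L y0 = mpcCostROM n_c k p K LK (g y0) := by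
  funext τ
  refine Finset.sum_congr rfl fun n _ => ?_
  rw [hL, apply_trajFin_of_semiconj (fun i => hK (τ i))]

theorem koopman_mpc_objective_eq_and_argmin_iff_general
    {M : Type*} (n_c k p : ℕ)
    (Φ : Fin n_c → M → M) (g : M → Fin k → ℝ)
    (K : Fin n_c → Matrix (Fin k) (Fin k) ℝ)
    (hK : ∀ (j : Fin n_c) (y : M), g (Φ j y) = (K j)ᵀ.mulVec (g y))
    (L : M → ℝ) (LK : (Fin k → ℝ) → ℝ) (hL : ∀ y : M, L y = LK (g y))
    (y0 : M) :
    (∀ τ : Fin p → Fin n_c,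
        mpcCostFull n_c p Φ L y0 τ = mpcCostROM n_c k p K LK (g y0) τ) ∧
    (∀ τstar : Fin p → Fin n_c,
      ((∀ τ : Fin p → Fin n_c,
          mpcCostROM n_c k p K LK (g y0) τstar ≤ mpcCostROM n_c k p K LK (g y0) τ) ↔
       (∀ τ : Fin p → Fin n_c,
          mpcCostFull n_c p Φ L y0 τstar ≤ mpcCostFull n_c p Φ L y0 τ))) := by
  have hcost := mpcCostFull_eq_mpcCostROM (p := p) hK hL y0
  exact ⟨congrFun hcost, fun τstar => by rw [hcost]⟩

/-- Theorem 4 of the paper: under the exact intertwining relation `g (Φ j y) = (K j)ᵀ g y`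
and the objective compatibility `L y = L_K (g y)`, the full and reduced MPC objectives
agree for every control sequence `τ ∈ {0,…,n_c-1}^p`, and consequently the optimal
solutions of the full and the K-ROM MPC problems coincide. -/
theorem koopman_mpc_objective_eq_and_argmin_iff
    {M : Type*} (n_c k p : ℕ) (hnc : 1 ≤ n_c)
    (Φ : Fin n_c → M → M) (g : M → Fin k → ℝ)
    (K : Fin n_c → Matrix (Fin k) (Fin k) ℝ)
    (hK : ∀ (j : Fin n_c) (y : M), g (Φ j y) = (K j)ᵀ.mulVec (g y))
    (L : M → ℝ) (LK : (Fin k → ℝ) → ℝ) (hL : ∀ y : M, L y = LK (g y))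
    (y0 : M) :
    (∀ τ : Fin p → Fin n_c,
        mpcCostFull n_c p Φ L y0 τ = mpcCostROM n_c k p K LK (g y0) τ) ∧
    (∀ τstar : Fin p → Fin n_c,
      ((∀ τ : Fin p → Fin n_c,
          mpcCostROM n_c k p K LK (g y0) τstar ≤ mpcCostROM n_c k p K LK (g y0) τ) ↔
       (∀ τ : Fin p → Fin n_c,
          mpcCostFull n_c p Φ L y0 τstar ≤ mpcCostFull n_c p Φ L y0 τ))) :=
  koopman_mpc_objective_eq_and_argmin_iff_general n_c k p Φ g K hK L LK hL y0
end
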